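/- Let p be a prime, F = F_p, and n ≥ 2. The number of distinct functions f : F^n → F defined by a canonical datum whose layer number r is at least 2 and whose last layer has at least two variables (k_r ≥ 2) equals 2^n p (p−1)^n ∑_{r=2}^{n−1} (p−1)^r [r! S(n,r) − n·(r−1)! S(n−1, r−1)]. -/

import Mathlib

/-- A proper nonempty subset `S` of `F_p` is a segment if `S = {0,…,j}` or
`F∖S = {0,…,j}` for some `0 ≤ j < p-1`. -/
def IsSegment (p : ℕ) (S : Finset (ZMod p)) : Prop :=
  ∃ j : ℕ, j < p - 1 ∧
    ((∀ x : ZMod p, x ∈ S ↔ x.val ≤ j) ∨ (∀ x : ZMod p, x ∈ S ↔ ¬ x.val ≤ j))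

/-- The indicator function `Q_S` of the complement of `S`: `0` on `S`, `1` off `S`. -/
def Qind (p : ℕ) (S : Finset (ZMod p)) (x : ZMod p) : ZMod p :=
  if x ∈ S then 0 else 1

/-- `f` is nested canalizing in the variable order `x_{σ(1)},…,x_{σ(n)}` with canalizing
input sets `S₁,…,Sₙ` (segments) and canalized outputs `b₁,…,bₙ` together with the final
output `bout = b_{n+1}`:  `f x = b i` where `i` is the least index with `x (σ i) ∈ S i`,
and `f x = bout` if no such index exists. -/
def NestedWith (p n : ℕ) (f : (Fin n → ZMod p) → ZMod p) (σ : Equiv.Perm (Fin n))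
    (S : Fin n → Finset (ZMod p)) (b : Fin n → ZMod p) (bout : ZMod p) : Prop :=
  (∀ i, IsSegment p (S i)) ∧
  (∀ x : Fin n → ZMod p, ∀ i : Fin n,
      x (σ i) ∈ S i → (∀ j : Fin n, j < i → x (σ j) ∉ S j) → f x = b i) ∧
  (∀ x : Fin n → ZMod p, (∀ i : Fin n, x (σ i) ∉ S i) → f x = bout)

/-- `f` is a nested canalizing function (NCF) if it is nested canalizing for some
variable order, canalizing input sets and canalized outputs, with `b n ≠ b (n+1)`. -/
def IsNCF (p n : ℕ) (f : (Fin n → ZMod p) → ZMod p) : Prop :=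
  ∃ (σ : Equiv.Perm (Fin n)) (S : Fin n → Finset (ZMod p)) (b : Fin n → ZMod p)
    (bout : ZMod p), (∀ h : n - 1 < n, b ⟨n - 1, h⟩ ≠ bout) ∧ NestedWith p n f σ S b bout

/-- `f` is `⟨i:a:b⟩` canalizing. -/
def IsCanalizing (p n : ℕ) (f : (Fin n → ZMod p) → ZMod p) (i : Fin n) (a b : ZMod p) :
    Prop :=
  (∀ x, x i = a → f x = b) ∧ ¬ (∀ x, x i ≠ a → f x = b)

/-- A canonical datum in `n` variables: a layer number `r`, a partition `A₁,…,A_r` of the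
variables into nonempty sets, segments `S₁,…,Sₙ`, and constants `B₁ ∈ F`,
`B₂,…,B_{r+1} ∈ F∖{0}` (here `B i` is `B_{i+1}`), with `B_r + B_{r+1} ≠ 0` if `|A_r| = 1`. -/
structure CanonicalDatum (p n : ℕ) where
  r : ℕ
  r_pos : 1 ≤ r
  r_le : r ≤ n
  A : Fin r → Finset (Fin n)
  A_nonempty : ∀ i, (A i).Nonempty
  A_disjoint : ∀ i j, i ≠ j → Disjoint (A i) (A j)
  A_cover : ∀ v : Fin n, ∃ i, v ∈ A i
  S : Fin n → Finset (ZMod p)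
  S_seg : ∀ j, IsSegment p (S j)
  B : Fin (r + 1) → ZMod p
  B_ne : ∀ i : Fin (r + 1), 0 < (i : ℕ) → B i ≠ 0
  last_cond : (A ⟨r - 1, Nat.sub_lt r_pos one_pos⟩).card = 1 →
      B ⟨r - 1, Nat.lt_succ_of_lt (Nat.sub_lt r_pos one_pos)⟩ + B ⟨r, Nat.lt_succ_self r⟩ ≠ 0

/-- Evaluation of the nested expression `M i * ( … ) + B i` with `fuel` layers left. -/
def nestEvalAux (p : ℕ) (M B : ℕ → ZMod p) : ℕ → ℕ → ZMod p
  | 0, i => B i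
  | k + 1, i => M i * nestEvalAux p M B k (i + 1) + B i

/-- The product of indicator functions of layer `i` (0-indexed), `M_{i+1}(x)`. -/
def CanonicalDatum.layer {p n : ℕ} (d : CanonicalDatum p n) (i : ℕ)
    (x : Fin n → ZMod p) : ZMod p :=
  if h : i < d.r then ∏ j ∈ d.A ⟨i, h⟩, Qind p (d.S j) (x j) else 1

/-- The constants of the datum as a function on `ℕ`. -/
def CanonicalDatum.Bn {p n : ℕ} (d : CanonicalDatum p n) (i : ℕ) : ZMod p :=
  if h : i < d.r + 1 then d.B ⟨i, h⟩ else 0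

/-- The function `f(x) = M₁(M₂(⋯(M_{r−1}(B_{r+1}M_r + B_r) + B_{r−1})⋯) + B₂) + B₁`
defined by a canonical datum. -/
def CanonicalDatum.eval {p n : ℕ} (d : CanonicalDatum p n) (x : Fin n → ZMod p) : ZMod p :=
  nestEvalAux p (fun i => d.layer i x) d.Bn d.r 0

/-- Stirling numbers of the second kind `S(n,k)`, characterized by
`k! · S(n,k) = ∑_{t=0}^{k} (−1)^t C(k,t) (k−t)^n`. -/
def stirling2 (n k : ℕ) : ℚ :=
  (∑ t ∈ Finset.range (k + 1), (-1 : ℚ) ^ t * (k.choose t) * ((k - t : ℕ) : ℚ) ^ n) /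
    k.factorial

/-- The number of nested canalizing functions `f : F_p^n → F_p`. -/
noncomputable def NCFcount (p n : ℕ) : ℕ :=
  Set.ncard {f : (Fin n → ZMod p) → ZMod p | IsNCF p n f}

/-!
A datum with `k_r ≥ 2` is determined by its function `f`. If `x` falls through the first `t`
layers (`x_j ∉ S_j` for all their variables) and is stopped by layer `t + 1` (or `t = r`), then
`f x = B₁ + ⋯ + B_{t+1}`; consecutive partial sums differ since `B_i ≠ 0`. Hence, on the points
that fall through the first `i` layers, `f` is constant on the hyperplane `x_j = a` exactly when
`x_j` is a variable of layer `i + 1` and `a ∈ S_j`: otherwise the hyperplane contains points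
stopped by two consecutive layers (if `x_j = a` stops nothing, by the last layer and by none,
which needs a second variable in `A_r`). Induction on `i` recovers layers, segments and constants.

The functions are therefore counted by their data: ordered partitions of the `n` variables into
`2 ≤ r ≤ n - 1` blocks whose last block is not a singleton, i.e. the `r! S(n,r)` surjections onto
`r` blocks minus the `n · (r-1)! S(n-1,r-1)` whose last fibre is a singleton, times `(2(p-1))^n`
choices of segments and `p (p-1)^r` choices of constants.
-/

open Finset

section Segment

variable {p : ℕ} {S : Finset (ZMod p)}

theorem IsSegment.nonempty (h : IsSegment p S) : S.Nonempty := by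
  obtain ⟨j, hj, h | h⟩ := h
  · exact ⟨0, (h 0).2 (by simp)⟩
  · refine ⟨((p - 1 : ℕ) : ZMod p), (h _).2 ?_⟩
    rw [ZMod.val_cast_of_lt (by omega)]
    omega

theorem IsSegment.exists_notMem (h : IsSegment p S) : ∃ a, a ∉ S := by
  obtain ⟨j, hj, h | h⟩ := h
  · refine ⟨((p - 1 : ℕ) : ZMod p), fun hm => ?_⟩
    rw [h, ZMod.val_cast_of_lt (by omega)] at hm
    omega
  · exact ⟨0, fun hm => (h 0).1 hm (by simp)⟩

variable [NeZero p]

variable (p) in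
def valSegment (b : Bool) (j : ℕ) : Finset (ZMod p) :=
  univ.filter fun x => decide (x.val ≤ j) = b

theorem isSegment_valSegment (b : Bool) {j : ℕ} (hj : j < p - 1) : IsSegment p (valSegment p b j) :=
  ⟨j, hj, by cases b <;> simp [valSegment]⟩

theorem valSegment_injective {b b' : Bool} {j j' : ℕ} (hj : j < p) (hj' : j' < p)
    (h : valSegment p b j = valSegment p b' j') : b = b' ∧ j = j' := by
  have hmem (x : ZMod p) : decide (x.val ≤ j) = b ↔ decide (x.val ≤ j') = b' := by
    simpa [valSegment] using Finset.ext_iff.1 h x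
  have hb : b = b' := by simpa using hmem 0
  subst hb
  have hle (x : ZMod p) : x.val ≤ j ↔ x.val ≤ j' := by
    cases b
    · simpa only [not_lt] using not_congr (by simpa using hmem x : j < x.val ↔ j' < x.val)
    · simpa using hmem x
  have h1 := (hle j).1
  have h2 := (hle j').2
  rw [ZMod.val_cast_of_lt hj] at h1
  rw [ZMod.val_cast_of_lt hj'] at h2
  exact ⟨rfl, le_antisymm (h1 le_rfl) (h2 le_rfl)⟩

theorem card_isSegment : Nat.card {S : Finset (ZMod p) // IsSegment p S} = 2 * (p - 1) := by
  let f : Bool × Fin (p - 1) → {S : Finset (ZMod p) // IsSegment p S} :=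
    fun bj => ⟨valSegment p bj.1 bj.2, isSegment_valSegment bj.1 bj.2.2⟩
  have hf : Function.Bijective f := by
    refine ⟨fun ⟨b, j⟩ ⟨b', j'⟩ h => ?_, fun ⟨S, j, hj, hS⟩ => ?_⟩
    · obtain ⟨rfl, hjj⟩ := valSegment_injective (by omega) (by omega) (congrArg Subtype.val h)
      exact Prod.ext rfl (Fin.ext hjj)
    · rcases hS with hS | hS
      · exact ⟨(true, ⟨j, hj⟩), Subtype.ext <| Finset.ext fun x => by simp [f, valSegment, hS]⟩
      · exact ⟨(false, ⟨j, hj⟩), Subtype.ext <| Finset.ext fun x => by simp [f, valSegment, hS]⟩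
  rw [← Nat.card_congr (Equiv.ofBijective f hf)]
  simp

end Segment

theorem nestEvalAux_eq_sum {p : ℕ} {M B : ℕ → ZMod p} {t k i : ℕ} (htk : t ≤ k)
    (hone : ∀ s < t, M (i + s) = 1) (hstop : t = k ∨ M (i + t) = 0) :
    nestEvalAux p M B k i = ∑ s ∈ range (t + 1), B (i + s) := by
  induction t generalizing k i with
  | zero =>
    cases k with
    | zero => simp [nestEvalAux]
    | succ k => simp_all [nestEvalAux]
  | succ t ih =>
    obtain ⟨k, rfl⟩ : ∃ k', k = k' + 1 := ⟨k - 1, by omega⟩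
    have hi : M i = 1 := by simpa using hone 0 (by omega)
    rw [nestEvalAux, hi, one_mul, sum_range_succ' _ (t + 1), add_zero,
      ih (by omega) (fun s hs => by simpa [add_assoc, add_comm 1] using hone (s + 1) (by omega))
        (by simpa [add_assoc, add_comm 1] using hstop)]
    simp only [add_assoc, add_comm 1]

namespace CanonicalDatum

variable {p n : ℕ} (d : CanonicalDatum p n)

/-- `block i` is the layer `A_{i+1}`; it is empty for `i ≥ r`. -/
def block (i : ℕ) : Finset (Fin n) := if h : i < d.r then d.A ⟨i, h⟩ else ∅

theorem block_nonempty {i : ℕ} (hi : i < d.r) : (d.block i).Nonempty := by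
  rw [block, dif_pos hi]
  exact d.A_nonempty _

theorem lt_r_of_mem_block {i : ℕ} {j : Fin n} (h : j ∈ d.block i) : i < d.r := by
  by_contra hi
  simp [block, hi] at h

theorem eq_of_mem_block {s t : ℕ} {j : Fin n} (hs : j ∈ d.block s) (ht : j ∈ d.block t) :
    s = t := by
  have hs' := d.lt_r_of_mem_block hs
  have ht' := d.lt_r_of_mem_block ht
  rw [block, dif_pos hs'] at hs
  rw [block, dif_pos ht'] at ht
  by_contra hne
  exact disjoint_left.1 (d.A_disjoint _ _ (by simpa [Fin.ext_iff] using hne)) hs ht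

theorem exists_mem_block (j : Fin n) : ∃ i, j ∈ d.block i := by
  obtain ⟨i, hi⟩ := d.A_cover j
  exact ⟨i, by rwa [block, dif_pos i.2]⟩

theorem layer_eq_prod (i : ℕ) (x : Fin n → ZMod p) :
    d.layer i x = ∏ j ∈ d.block i, Qind p (d.S j) (x j) := by
  unfold layer block
  split_ifs <;> simp

def PassesBelow (t : ℕ) (x : Fin n → ZMod p) : Prop :=
  ∀ s < t, ∀ j ∈ d.block s, x j ∉ d.S j

def partialSum (t : ℕ) : ZMod p := ∑ s ∈ range (t + 1), d.Bn s

theorem partialSum_succ (t : ℕ) : d.partialSum (t + 1) = d.partialSum t + d.Bn (t + 1) :=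
  sum_range_succ _ _

theorem partialSum_succ_ne {t : ℕ} (ht : t < d.r) : d.partialSum (t + 1) ≠ d.partialSum t := by
  rw [partialSum_succ, Ne, add_eq_left, Bn, dif_pos (by omega)]
  exact d.B_ne _ (Nat.succ_pos t)

theorem eval_eq_partialSum {t : ℕ} {x : Fin n → ZMod p} (ht : t ≤ d.r)
    (hx : d.PassesBelow t x) (hstop : t = d.r ∨ ∃ j ∈ d.block t, x j ∈ d.S j) :
    d.eval x = d.partialSum t := by
  have := nestEvalAux_eq_sum (M := fun i => d.layer i x) (B := d.Bn) (i := 0) ht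
    (fun s hs => by
      rw [zero_add, layer_eq_prod]
      exact prod_eq_one fun j hj => if_neg (hx s hs j hj))
    (hstop.imp_right fun ⟨j, hj, hxj⟩ => by
      rw [zero_add, layer_eq_prod]
      exact prod_eq_zero hj (if_pos hxj))
  simpa [eval, partialSum] using this

variable {d} in
theorem PassesBelow.mono {s t : ℕ} {x : Fin n → ZMod p} (hx : d.PassesBelow t x) (hst : s ≤ t) :
    d.PassesBelow s x :=
  fun u hu => hx u (by omega)

variable {d} in
theorem PassesBelow.update {t : ℕ} {x : Fin n → ZMod p} {j : Fin n} {a : ZMod p}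
    (hx : d.PassesBelow t x) (ha : ∀ s < t, j ∈ d.block s → a ∉ d.S j) :
    d.PassesBelow t (Function.update x j a) := by
  intro s hs k hk
  rcases eq_or_ne k j with rfl | hkj
  · simpa using ha s hs hk
  · simpa [hkj] using hx s hs k hk

noncomputable def offPoint (j : Fin n) : ZMod p := (d.S_seg j).exists_notMem.choose

theorem passesBelow_offPoint (t : ℕ) : d.PassesBelow t d.offPoint :=
  fun _ _ j _ => (d.S_seg j).exists_notMem.choose_spec

noncomputable def hitPoint (w : Fin n) : Fin n → ZMod p :=
  Function.update d.offPoint w (d.S_seg w).nonempty.choose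

theorem hitPoint_self_mem (w : Fin n) : d.hitPoint w w ∈ d.S w := by
  simpa [hitPoint] using (d.S_seg w).nonempty.choose_spec

theorem passesBelow_hitPoint {t : ℕ} {w : Fin n} (hw : ∀ s < t, w ∉ d.block s) :
    d.PassesBelow t (d.hitPoint w) :=
  (d.passesBelow_offPoint t).update fun s hs hws => absurd hws (hw s hs)

def SliceConst (i : ℕ) (f : (Fin n → ZMod p) → ZMod p) (j : Fin n) (a : ZMod p) : Prop :=
  ∀ x y, d.PassesBelow i x → d.PassesBelow i y → x j = a → y j = a → f x = f y

/-- The slice contains points at which the evaluation stops at layer `k - 1` and at layer `k`,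
with consecutive, hence distinct, partial sums as values. -/
theorem not_sliceConst_eval {i k : ℕ} {j w : Fin n} {a : ZMod p} (hik : i < k) (hk : k ≤ d.r)
    (hoff : ∀ s < k, j ∈ d.block s → a ∉ d.S j) (hstop : k = d.r ∨ j ∈ d.block k ∧ a ∈ d.S j)
    (hw : w ∈ d.block (k - 1)) (hwj : w ≠ j) : ¬ d.SliceConst i d.eval j a := by
  have hx : d.eval (Function.update (d.hitPoint w) j a) = d.partialSum (k - 1) := by
    refine d.eval_eq_partialSum (by omega) (PassesBelow.update ?_ fun s hs => hoff s (by omega))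
      (Or.inr ⟨w, hw, by simpa [hwj] using d.hitPoint_self_mem w⟩)
    exact d.passesBelow_hitPoint fun s hs hws => by have := d.eq_of_mem_block hws hw; omega
  have hy : d.eval (Function.update d.offPoint j a) = d.partialSum k :=
    d.eval_eq_partialSum hk ((d.passesBelow_offPoint k).update hoff)
      (hstop.imp_right fun h => ⟨j, h.1, by simpa using h.2⟩)
  intro hconst
  have hne := d.partialSum_succ_ne (t := k - 1) (by omega)
  rw [Nat.sub_add_cancel (by omega), ← hy, ← hx] at hne
  refine hne (hconst _ _ ?_ ?_ (by simp) (by simp))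
  · exact ((d.passesBelow_offPoint k).update hoff).mono hik.le
  · refine (PassesBelow.update ?_ fun s hs => hoff s (by omega)).mono (Nat.le_sub_one_of_lt hik)
    exact d.passesBelow_hitPoint fun s hs hws => by have := d.eq_of_mem_block hws hw; omega

theorem sliceConst_eval_iff (hlast : 2 ≤ (d.A ⟨d.r - 1, Nat.sub_lt d.r_pos one_pos⟩).card)
    {i : ℕ} {j : Fin n} {a : ZMod p} (hi : i < d.r) (hj : ∀ s < i, j ∉ d.block s) :
    d.SliceConst i d.eval j a ↔ j ∈ d.block i ∧ a ∈ d.S j := by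
  constructor
  · intro hconst
    by_contra hnot
    by_cases hon : ∃ k, j ∈ d.block k ∧ a ∈ d.S j
    · obtain ⟨k, hjk, ha⟩ := hon
      have hik : i < k := by
        rcases lt_trichotomy i k with h | rfl | h
        · exact h
        · exact absurd ⟨hjk, ha⟩ hnot
        · exact absurd hjk (hj k h)
      have hkr := d.lt_r_of_mem_block hjk
      obtain ⟨w, hw⟩ := d.block_nonempty (i := k - 1) (by omega)
      refine d.not_sliceConst_eval hik hkr.le
        (fun s hs hjs => absurd (d.eq_of_mem_block hjs hjk) hs.ne) (Or.inr ⟨hjk, ha⟩) hw ?_ hconst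
      rintro rfl
      have := d.eq_of_mem_block hw hjk
      omega
    · simp only [not_exists, not_and] at hon
      -- `x j = a` never stops the evaluation; this is where `k_r ≥ 2` enters.
      have hlast' : 1 < (d.block (d.r - 1)).card := by
        rwa [block, dif_pos (Nat.sub_lt d.r_pos one_pos)]
      obtain ⟨w, hw, hwj⟩ := exists_mem_ne hlast' j
      exact d.not_sliceConst_eval hi le_rfl (fun s _ => hon s) (Or.inl rfl) hw hwj hconst
  · rintro ⟨hji, ha⟩ x y hx hy hxj hyj
    rw [d.eval_eq_partialSum hi.le hx (Or.inr ⟨j, hji, hxj ▸ ha⟩),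
      d.eval_eq_partialSum hi.le hy (Or.inr ⟨j, hji, hyj ▸ ha⟩)]

end CanonicalDatum

namespace CanonicalDatum

variable {p n : ℕ} {d d' : CanonicalDatum p n}

def AgreeBelow (d d' : CanonicalDatum p n) (t : ℕ) : Prop :=
  ∀ s < t, d.block s = d'.block s ∧ (∀ j ∈ d.block s, d.S j = d'.S j) ∧
    d.partialSum s = d'.partialSum s

theorem AgreeBelow.symm {t : ℕ} (h : AgreeBelow d d' t) : AgreeBelow d' d t := by
  intro s hs
  obtain ⟨hb, hS, hP⟩ := h s hs
  exact ⟨hb.symm, fun j hj => (hS j (hb ▸ hj)).symm, hP.symm⟩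

theorem AgreeBelow.passesBelow_iff {t : ℕ} (h : AgreeBelow d d' t) {x : Fin n → ZMod p} :
    d.PassesBelow t x ↔ d'.PassesBelow t x := by
  suffices ∀ {d d' : CanonicalDatum p n}, AgreeBelow d d' t → d.PassesBelow t x →
      d'.PassesBelow t x from ⟨this h, this h.symm⟩
  intro d d' h hx s hs j hj
  obtain ⟨hb, hS, -⟩ := h s hs
  rw [← hb] at hj
  rw [← hS j hj]
  exact hx s hs j hj

theorem AgreeBelow.block_subset {i : ℕ} (h : AgreeBelow d d' i)
    (hd : 2 ≤ (d.A ⟨d.r - 1, Nat.sub_lt d.r_pos one_pos⟩).card)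
    (hd' : 2 ≤ (d'.A ⟨d'.r - 1, Nat.sub_lt d'.r_pos one_pos⟩).card)
    (hi : i < d.r) (hi' : i < d'.r) (he : d.eval = d'.eval) : d.block i ⊆ d'.block i := by
  intro j hj
  have hlow : ∀ s < i, j ∉ d.block s := fun s hs hjs => hs.ne (d.eq_of_mem_block hjs hj)
  have hlow' : ∀ s < i, j ∉ d'.block s := fun s hs => (h s hs).1 ▸ hlow s hs
  obtain ⟨a, ha⟩ := (d.S_seg j).nonempty
  have hconst := (d.sliceConst_eval_iff hd hi hlow).2 ⟨hj, ha⟩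
  have hconst' : d'.SliceConst i d'.eval j a := fun x y hx hy =>
    he ▸ hconst x y (h.passesBelow_iff.2 hx) (h.passesBelow_iff.2 hy)
  exact ((d'.sliceConst_eval_iff hd' hi' hlow').1 hconst').1

theorem AgreeBelow.succ {i : ℕ} (h : AgreeBelow d d' i)
    (hd : 2 ≤ (d.A ⟨d.r - 1, Nat.sub_lt d.r_pos one_pos⟩).card)
    (hd' : 2 ≤ (d'.A ⟨d'.r - 1, Nat.sub_lt d'.r_pos one_pos⟩).card)
    (hi : i < d.r) (hi' : i < d'.r) (he : d.eval = d'.eval) : AgreeBelow d d' (i + 1) := by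
  have hb : d.block i = d'.block i :=
    (h.block_subset hd hd' hi hi' he).antisymm (h.symm.block_subset hd' hd hi' hi he.symm)
  have hS : ∀ j ∈ d.block i, d.S j = d'.S j := by
    intro j hj
    have hlow : ∀ s < i, j ∉ d.block s := fun s hs hjs => hs.ne (d.eq_of_mem_block hjs hj)
    have hlow' : ∀ s < i, j ∉ d'.block s := fun s hs => (h s hs).1 ▸ hlow s hs
    ext a
    have hslice : d.SliceConst i d.eval j a ↔ d'.SliceConst i d'.eval j a := by
      simp only [SliceConst, h.passesBelow_iff, he]
    calc a ∈ d.S j ↔ j ∈ d.block i ∧ a ∈ d.S j := (and_iff_right hj).symm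
      _ ↔ d.SliceConst i d.eval j a := (d.sliceConst_eval_iff hd hi hlow).symm
      _ ↔ d'.SliceConst i d'.eval j a := hslice
      _ ↔ j ∈ d'.block i ∧ a ∈ d'.S j := d'.sliceConst_eval_iff hd' hi' hlow'
      _ ↔ a ∈ d'.S j := and_iff_right (hb ▸ hj)
  have hP : d.partialSum i = d'.partialSum i := by
    obtain ⟨w, hw⟩ := d.block_nonempty hi
    have hpass : d.PassesBelow i (d.hitPoint w) :=
      d.passesBelow_hitPoint fun s hs hws => hs.ne (d.eq_of_mem_block hws hw)
    rw [← d.eval_eq_partialSum hi.le hpass (Or.inr ⟨w, hw, d.hitPoint_self_mem w⟩), he]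
    refine d'.eval_eq_partialSum hi'.le (h.passesBelow_iff.1 hpass)
      (Or.inr ⟨w, hb ▸ hw, hS w hw ▸ d.hitPoint_self_mem w⟩)
  intro s hs
  rcases Nat.lt_succ_iff_lt_or_eq.1 hs with hs | rfl
  · exact h s hs
  · exact ⟨hb, hS, hP⟩

theorem AgreeBelow.r_le (h : AgreeBelow d d' d.r) (he : d.eval = d'.eval) : d'.r ≤ d.r := by
  by_contra! hlt
  obtain ⟨w, hw⟩ := d'.block_nonempty (i := d'.r - 1) (by omega)
  have hpass : d'.PassesBelow (d'.r - 1) (d'.hitPoint w) :=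
    d'.passesBelow_hitPoint fun s hs hws => hs.ne (d'.eq_of_mem_block hws hw)
  have hne := d'.partialSum_succ_ne (t := d'.r - 1) (by omega)
  rw [Nat.sub_add_cancel d'.r_pos,
    ← d'.eval_eq_partialSum le_rfl (d'.passesBelow_offPoint _) (Or.inl rfl),
    ← d'.eval_eq_partialSum (by omega) hpass (Or.inr ⟨w, hw, d'.hitPoint_self_mem w⟩), ← he,
    d.eval_eq_partialSum le_rfl (h.passesBelow_iff.2 (d'.passesBelow_offPoint _)) (Or.inl rfl),
    d.eval_eq_partialSum le_rfl (h.passesBelow_iff.2 (hpass.mono (by omega))) (Or.inl rfl)]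
    at hne
  exact hne rfl

theorem ext_of_block (hr : d.r = d'.r) (hblock : ∀ i, d.block i = d'.block i) (hS : d.S = d'.S)
    (hB : ∀ i, d.Bn i = d'.Bn i) : d = d' := by
  obtain ⟨r, _, _, A, _, _, _, S, _, B, _, _⟩ := d
  obtain ⟨r', _, _, A', _, _, _, S', _, B', _, _⟩ := d'
  obtain rfl : r = r' := hr
  obtain rfl : S = S' := hS
  obtain rfl : A = A' := funext fun i => by simpa [block, i.2] using hblock i
  obtain rfl : B = B' := funext fun i => by simpa [Bn, i.2] using hB i
  rfl

theorem eq_of_agreeBelow (hr : d.r = d'.r) (h : AgreeBelow d d' (d.r + 1)) : d = d' := by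
  refine ext_of_block hr (fun i => ?_) (funext fun j => ?_) fun i => ?_
  · by_cases hi : i ≤ d.r
    · exact (h i (by omega)).1
    · simp [block, show ¬ i < d.r by omega, show ¬ i < d'.r by omega]
  · obtain ⟨i, hi⟩ := d.exists_mem_block j
    exact (h i (by have := d.lt_r_of_mem_block hi; omega)).2.1 j hi
  · rcases i with _ | i
    · simpa [partialSum] using (h 0 (by omega)).2.2
    · by_cases hi : i + 1 ≤ d.r
      · have h1 := (h (i + 1) (by omega)).2.2
        rw [partialSum_succ, partialSum_succ, (h i (by omega)).2.2] at h1
        exact add_left_cancel h1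
      · simp [Bn, show ¬ i + 1 < d.r + 1 by omega, show ¬ i + 1 < d'.r + 1 by omega]

theorem eq_of_eval_eq (hd : 2 ≤ (d.A ⟨d.r - 1, Nat.sub_lt d.r_pos one_pos⟩).card)
    (hd' : 2 ≤ (d'.A ⟨d'.r - 1, Nat.sub_lt d'.r_pos one_pos⟩).card) (he : d.eval = d'.eval) :
    d = d' := by
  have hagree : ∀ i ≤ min d.r d'.r, AgreeBelow d d' i := by
    intro i hi
    induction i with
    | zero => exact fun s hs => absurd hs (Nat.not_lt_zero s)
    | succ i ih => exact (ih (by omega)).succ hd hd' (by omega) (by omega) he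
  have hr : d.r = d'.r := by
    rcases le_total d.r d'.r with h | h
    · exact le_antisymm h ((hagree d.r (by omega)).r_le he)
    · exact le_antisymm ((hagree d'.r (by omega)).symm.r_le he.symm) h
  refine eq_of_agreeBelow hr fun s hs => ?_
  rcases Nat.lt_succ_iff_lt_or_eq.1 hs with hs | rfl
  · exact hagree d.r (by omega) s hs
  · refine ⟨by simp [block, hr], by simp [block], ?_⟩
    rw [← d.eval_eq_partialSum le_rfl (d.passesBelow_offPoint _) (Or.inl rfl), he,
      d'.eval_eq_partialSum hr.le ((hagree d.r (by omega)).passesBelow_iff.1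
        (d.passesBelow_offPoint _)) (Or.inl hr)]

end CanonicalDatum

section Surjections

variable {α β : Type*} [Fintype α] [Fintype β] [DecidableEq α] [DecidableEq β]

variable (α β) in
theorem card_surjective_eq :
    (Fintype.card {f : α → β // Function.Surjective f} : ℚ) =
      (Fintype.card β).factorial * stirling2 (Fintype.card α) (Fintype.card β) := by
  -- inclusion–exclusion over the sets of maps missing a given value
  set miss : β → Finset (α → β) := fun b => univ.filter fun f => ∀ a, f a ≠ b
  have hsurj : (univ.inf fun b => (miss b)ᶜ) = univ.filter Function.Surjective := by
    ext f
    simp [miss, mem_inf, Function.Surjective]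
  have hmiss : ∀ t : Finset β, #(t.inf miss) = (Fintype.card β - #t) ^ Fintype.card α := by
    intro t
    have : t.inf miss = Fintype.piFinset fun _ => tᶜ := by
      ext f
      simp only [miss, mem_inf, mem_filter, mem_univ, true_and, Fintype.mem_piFinset, mem_compl]
      exact ⟨fun h a ha => h _ ha a rfl, fun h b hb a hab => h a (hab ▸ hb)⟩
    rw [this, Fintype.card_piFinset, prod_const, card_compl, card_univ]
  have hie := inclusion_exclusion_card_inf_compl (univ : Finset β) miss
  rw [hsurj] at hie
  simp_rw [hmiss, Nat.cast_pow] at hie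
  rw [sum_powerset_apply_card
    (fun m => (-1 : ℤ) ^ m * ((Fintype.card β - m : ℕ) : ℤ) ^ Fintype.card α), card_univ] at hie
  rw [stirling2, mul_div_cancel₀ _ (by exact_mod_cast (Fintype.card β).factorial_ne_zero),
    Fintype.card_subtype]
  simp only [nsmul_eq_mul] at hie
  rw [← Int.cast_natCast, hie]
  push_cast
  exact sum_congr rfl fun m _ => by ring

def surjectiveFiberSingletonEquiv (c : β) (v : α) :
    {φ : α → β // Function.Surjective φ ∧ ∀ w, φ w = c ↔ w = v} ≃
      {ψ : {w // w ≠ v} → {e // e ≠ c} // Function.Surjective ψ} where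
  toFun φ := ⟨fun w => ⟨φ.1 w, fun h => w.2 ((φ.2.2 w).1 h)⟩, fun e => by
    obtain ⟨w, hw⟩ := φ.2.1 e
    refine ⟨⟨w, fun hwv => e.2 ?_⟩, Subtype.ext hw⟩
    rw [← hw, φ.2.2 w]
    exact hwv⟩
  invFun ψ := ⟨fun w => if h : w = v then c else ψ.1 ⟨w, h⟩, by
    refine ⟨fun e => ?_, fun w => ?_⟩
    · by_cases he : e = c
      · exact ⟨v, by simp [he]⟩
      · obtain ⟨w, hw⟩ := ψ.2 ⟨e, he⟩
        exact ⟨w, by simp [w.2, hw]⟩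
    · by_cases hw : w = v
      · simp [hw]
      · simpa [hw] using (ψ.1 ⟨w, hw⟩).2⟩
  left_inv φ := by
    ext w
    by_cases hw : w = v
    · simp [hw, (φ.2.2 v).2 rfl]
    · simp [hw]
  right_inv ψ := by
    ext w
    simp [w.2]

theorem card_surjective_fiber_eq_one (c : β) :
    (Fintype.card {φ : α → β // Function.Surjective φ ∧ #(univ.filter (φ · = c)) = 1} : ℚ) =
      Fintype.card α * ((Fintype.card β - 1).factorial *
        stirling2 (Fintype.card α - 1) (Fintype.card β - 1)) := by
  have hsplit : (univ.filter fun φ : α → β => Function.Surjective φ ∧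
      #(univ.filter (φ · = c)) = 1) = univ.biUnion fun v =>
        univ.filter fun φ => Function.Surjective φ ∧ ∀ w, φ w = c ↔ w = v := by
    ext φ
    simp [card_eq_one, Finset.ext_iff]
  have hdisj : (↑(univ : Finset α) : Set α).PairwiseDisjoint fun v =>
      univ.filter fun φ : α → β => Function.Surjective φ ∧ ∀ w, φ w = c ↔ w = v := by
    intro v _ v' _ hvv'
    refine disjoint_left.2 fun φ hv hv' => hvv' ?_
    simp only [mem_filter] at hv hv'
    exact (hv'.2.2 v).1 ((hv.2.2 v).2 rfl)
  rw [Fintype.card_subtype, hsplit, card_biUnion hdisj, Nat.cast_sum]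
  simp_rw [← Fintype.card_subtype, Fintype.card_congr (surjectiveFiberSingletonEquiv c _)]
  simp [card_surjective_eq, Fintype.card_subtype_compl]

end Surjections

section OrderedPartition

def IsOrderedPartition {α β : Type*} (A : β → Finset α) : Prop :=
  (∀ i, (A i).Nonempty) ∧ (∀ i j, i ≠ j → Disjoint (A i) (A j)) ∧ ∀ v, ∃ i, v ∈ A i

namespace IsOrderedPartition

variable {α β : Type*} {A : β → Finset α}

noncomputable def index (hA : IsOrderedPartition A) (v : α) : β := (hA.2.2 v).choose

theorem mem_iff_index_eq (hA : IsOrderedPartition A) {v : α} {i : β} :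
    v ∈ A i ↔ hA.index v = i := by
  refine ⟨fun hv => ?_, fun h => h ▸ (hA.2.2 v).choose_spec⟩
  by_contra hne
  exact disjoint_left.1 (hA.2.1 _ _ hne) (hA.2.2 v).choose_spec hv

theorem index_surjective (hA : IsOrderedPartition A) : Function.Surjective hA.index := fun i =>
  (hA.1 i).imp fun _ hv => hA.mem_iff_index_eq.1 hv

theorem card_lt [Fintype α] [Fintype β] (hA : IsOrderedPartition A) {c : β} (hc : 2 ≤ #(A c)) :
    Fintype.card β < Fintype.card α := by
  refine Fintype.card_lt_of_surjective_not_injective _ hA.index_surjective fun hinj => ?_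
  obtain ⟨v, hv, w, hw, hvw⟩ := one_lt_card.1 hc
  exact hvw (hinj ((hA.mem_iff_index_eq.1 hv).trans (hA.mem_iff_index_eq.1 hw).symm))

end IsOrderedPartition

theorem isOrderedPartition_fibers {α β : Type*} [Fintype α] [DecidableEq β] {φ : α → β}
    (hφ : Function.Surjective φ) :
    IsOrderedPartition fun i => univ.filter (φ · = i) :=
  ⟨fun i => (hφ i).imp fun v hv => by simpa using hv,
    fun _ _ hij => disjoint_filter.2 fun _ _ hi hj => hij (hi ▸ hj), fun v => ⟨φ v, by simp⟩⟩

noncomputable def orderedPartitionEquivSurjective {α β : Type*} [Fintype α] [DecidableEq β] :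
    {A : β → Finset α // IsOrderedPartition A} ≃ {φ : α → β // Function.Surjective φ} where
  toFun A := ⟨A.2.index, A.2.index_surjective⟩
  invFun φ := ⟨_, isOrderedPartition_fibers φ.2⟩
  left_inv A := Subtype.ext <| funext fun i => Finset.ext fun v => by
    simp [A.2.mem_iff_index_eq]
  right_inv φ := Subtype.ext <| funext fun v =>
    ((isOrderedPartition_fibers φ.2).mem_iff_index_eq).1 (by simp)

theorem card_orderedPartition_two_le {α β : Type*} [Fintype α] [Fintype β] [DecidableEq α]
    [DecidableEq β] (c : β) :
    (Nat.card {A : β → Finset α // IsOrderedPartition A ∧ 2 ≤ #(A c)} : ℚ) =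
      (Fintype.card β).factorial * stirling2 (Fintype.card α) (Fintype.card β) -
        Fintype.card α * ((Fintype.card β - 1).factorial *
          stirling2 (Fintype.card α - 1) (Fintype.card β - 1)) := by
  have hfiber (A : {A : β → Finset α // IsOrderedPartition A}) :
      univ.filter ((orderedPartitionEquivSurjective A).1 · = c) = A.1 c :=
    Finset.ext fun v => by
      rw [mem_filter, A.2.mem_iff_index_eq]
      simp [orderedPartitionEquivSurjective]
  have htransfer : Nat.card {A : β → Finset α // IsOrderedPartition A ∧ 2 ≤ #(A c)} =
      Nat.card {φ : α → β // Function.Surjective φ ∧ 2 ≤ #(univ.filter (φ · = c))} :=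
    Nat.card_congr <| (Equiv.subtypeSubtypeEquivSubtypeInter _ (fun A => 2 ≤ #(A c))).symm.trans <|
      (orderedPartitionEquivSurjective.subtypeEquiv fun A => by rw [hfiber]).trans <|
        Equiv.subtypeSubtypeEquivSubtypeInter _ (fun φ => 2 ≤ #(univ.filter (φ · = c)))
  have hsplit : Fintype.card {φ : α → β // Function.Surjective φ ∧ 2 ≤ #(univ.filter (φ · = c))} +
      Fintype.card {φ : α → β // Function.Surjective φ ∧ #(univ.filter (φ · = c)) = 1} =
        Fintype.card {φ : α → β // Function.Surjective φ} := by
    simp only [Fintype.card_subtype]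
    rw [← card_filter_add_card_filter_not (s := univ.filter Function.Surjective)
      (fun φ : α → β => 2 ≤ #(univ.filter (φ · = c))), filter_filter, filter_filter]
    congr 2
    ext φ
    simp only [mem_filter, mem_univ, true_and]
    refine and_congr_right fun hφ => ?_
    obtain ⟨v, hv⟩ := hφ c
    have : 0 < #(univ.filter (φ · = c)) := card_pos.2 ⟨v, by simp [hv]⟩
    omega
  rw [htransfer, Nat.card_eq_fintype_card, ← card_surjective_eq, ← card_surjective_fiber_eq_one c,
    ← hsplit]
  push_cast
  ring

end OrderedPartition

theorem card_tail_ne_zero (M : Type*) [Fintype M] [Zero M] [DecidableEq M] (r : ℕ) :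
    Nat.card {B : Fin (r + 1) → M // ∀ i : Fin (r + 1), 0 < (i : ℕ) → B i ≠ 0} =
      Fintype.card M * (Fintype.card M - 1) ^ r := by
  have : (univ.filter fun B : Fin (r + 1) → M => ∀ i : Fin (r + 1), 0 < (i : ℕ) → B i ≠ 0) =
      Fintype.piFinset (Fin.cons univ fun _ => univ.erase 0) := by
    ext B
    simp [Fin.forall_fin_succ, Fin.cons_zero, Fin.cons_succ]
  rw [Nat.card_eq_fintype_card, Fintype.card_subtype, this, Fintype.card_piFinset,
    Fin.prod_univ_succ]
  simp [card_erase_of_mem]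

namespace CanonicalDatum

variable {p n : ℕ}

def goodSet (p n : ℕ) : Set (CanonicalDatum p n) :=
  {d | 2 ≤ d.r ∧ 2 ≤ (d.A ⟨d.r - 1, Nat.sub_lt d.r_pos one_pos⟩).card}

def goodSetEquiv :
    goodSet p n ≃
      Σ r : Icc 2 (n - 1),
        {A : Fin r → Finset (Fin n) // IsOrderedPartition A ∧
          2 ≤ #(A ⟨r - 1, Nat.sub_lt (by have := (mem_Icc.1 r.2).1; omega) one_pos⟩)} ×
        (Fin n → {S : Finset (ZMod p) // IsSegment p S}) ×
        {B : Fin (r + 1) → ZMod p // ∀ i : Fin (r + 1), 0 < (i : ℕ) → B i ≠ 0} where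
  toFun d :=
    have hA : IsOrderedPartition d.1.A := ⟨d.1.A_nonempty, d.1.A_disjoint, d.1.A_cover⟩
    ⟨⟨d.1.r, mem_Icc.2 ⟨d.2.1, by have := hA.card_lt d.2.2; simp at this; omega⟩⟩,
      ⟨d.1.A, hA, d.2.2⟩, fun j => ⟨d.1.S j, d.1.S_seg j⟩, ⟨d.1.B, d.1.B_ne⟩⟩
  invFun x :=
    ⟨{ r := x.1
       r_pos := by have := (mem_Icc.1 x.1.2).1; omega
       r_le := by have := (mem_Icc.1 x.1.2).2; omega
       A := x.2.1.1
       A_nonempty := x.2.1.2.1.1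
       A_disjoint := x.2.1.2.1.2.1
       A_cover := x.2.1.2.1.2.2
       S := fun j => (x.2.2.1 j).1
       S_seg := fun j => (x.2.2.1 j).2
       B := x.2.2.2.1
       B_ne := x.2.2.2.2
       -- vacuous: the last block has at least two variables
       last_cond := fun h => absurd h (by have := x.2.1.2.2; omega) },
      (mem_Icc.1 x.1.2).1, x.2.1.2.2⟩
  left_inv _ := rfl
  right_inv _ := rfl

theorem card_goodSet [NeZero p] :
    (Nat.card (goodSet p n) : ℚ) =
      ∑ r ∈ Icc 2 (n - 1), ((r.factorial : ℚ) * stirling2 n r -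
          (n : ℚ) * ((r - 1).factorial * stirling2 (n - 1) (r - 1))) *
        ((2 * ((p : ℚ) - 1)) ^ n * ((p : ℚ) * ((p : ℚ) - 1) ^ r)) := by
  rw [Nat.card_congr goodSetEquiv, Nat.card_sigma, Nat.cast_sum, ← sum_coe_sort (Icc 2 (n - 1))]
  refine sum_congr rfl fun r _ => ?_
  rw [Nat.card_prod, Nat.card_prod, Nat.card_fun, card_isSegment, card_tail_ne_zero, ZMod.card,
    Nat.card_eq_fintype_card (α := Fin n)]
  push_cast [Nat.cast_sub (NeZero.one_le : 1 ≤ p)]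
  rw [card_orderedPartition_two_le]
  simp

end CanonicalDatum

theorem stmt18_general (p n : ℕ) :
    (Set.ncard {f : (Fin n → ZMod p) → ZMod p |
        ∃ d : CanonicalDatum p n, 2 ≤ d.r ∧
          2 ≤ (d.A ⟨d.r - 1, Nat.sub_lt d.r_pos one_pos⟩).card ∧ f = d.eval} : ℚ) =
      2 ^ n * (p : ℚ) * ((p : ℚ) - 1) ^ n *
        ∑ r ∈ Finset.Icc 2 (n - 1), ((p : ℚ) - 1) ^ r *
          ((r.factorial : ℚ) * stirling2 n r -
            (n : ℚ) * ((r - 1).factorial : ℚ) * stirling2 (n - 1) (r - 1)) := by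
  obtain rfl | hp := eq_or_ne p 0
  · -- `ZMod 0 = ℤ` has no segments
    have hempty : IsEmpty (CanonicalDatum 0 n) :=
      ⟨fun d => by
        obtain ⟨j, hj, -⟩ := d.S_seg ⟨0, by have := d.r_pos; have := d.r_le; omega⟩
        omega⟩
    simp
  have : NeZero p := ⟨hp⟩
  have himage : {f : (Fin n → ZMod p) → ZMod p | ∃ d : CanonicalDatum p n, 2 ≤ d.r ∧
      2 ≤ (d.A ⟨d.r - 1, Nat.sub_lt d.r_pos one_pos⟩).card ∧ f = d.eval} =
      CanonicalDatum.eval '' CanonicalDatum.goodSet p n := by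
    ext f
    simp [CanonicalDatum.goodSet, eq_comm, and_assoc]
  rw [himage,
    Set.InjOn.ncard_image fun d hd d' hd' he => CanonicalDatum.eq_of_eval_eq hd.2 hd'.2 he,
    ← Nat.card_coe_set_eq, CanonicalDatum.card_goodSet, mul_sum]
  exact sum_congr rfl fun r _ => by rw [mul_pow]; ring

/-- the number of functions defined by a canonical datum with layer number
`r ≥ 2` and `k_r ≥ 2` equals
`2^n p (p−1)^n ∑_{r=2}^{n−1} (p−1)^r [r! S(n,r) − n·(r−1)! S(n−1,r−1)]`. -/
theorem stmt18 (p n : ℕ) [Fact (Nat.Prime p)] (hn : 2 ≤ n) :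
    (Set.ncard {f : (Fin n → ZMod p) → ZMod p |
        ∃ d : CanonicalDatum p n, 2 ≤ d.r ∧
          2 ≤ (d.A ⟨d.r - 1, Nat.sub_lt d.r_pos one_pos⟩).card ∧ f = d.eval} : ℚ) =
      2 ^ n * (p : ℚ) * ((p : ℚ) - 1) ^ n *
        ∑ r ∈ Finset.Icc 2 (n - 1), ((p : ℚ) - 1) ^ r *
          ((r.factorial : ℚ) * stirling2 n r -
            (n : ℚ) * ((r - 1).factorial : ℚ) * stirling2 (n - 1) (r - 1)) :=
  stmt18_general p n
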